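/- arXiv:math/0412492 — 3 statements merged into one kernel-verified Lean document; each statement's English description precedes it below -/
import Mathlib

section
/- If G is a torsion-free CSA group, then every solvable subgroup of G is abelian. -/
/-- A subgroup `K` of `G` is malnormal if `gKg⁻¹ ∩ K = {1}` for every `g ∉ K`. -/
def Malnormal {G : Type*} [Group G] (K : Subgroup G) : Prop :=
  ∀ g : G, g ∉ K → ∀ x : G, x ∈ K → g * x * g⁻¹ ∈ K → x = 1

/-- Old Mathlib's `Monoid.IsTorsionFree` (removed), with its original definition. -/
def Monoid.IsTorsionFree (G : Type*) [Monoid G] : Prop :=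
  ∀ g : G, g ≠ 1 → ¬IsOfFinOrder g

/-!
The last nontrivial term `A` of the derived series of a solvable subgroup `H` is abelian and
normal in `H`. A maximal abelian subgroup `M ⊇ A` is malnormal, and every `h ∈ H` conjugates a
nontrivial element of `A` back into `A ⊆ M`, so `h ∈ M`. Hence `H ≤ M` is abelian.
-/

open Subgroup

section

variable {G : Type*} [Group G]

theorem Subgroup.exists_le_maximal_isMulCommutative (A : Subgroup G) [IsMulCommutative A] :
    ∃ M : Subgroup G, A ≤ M ∧ Maximal (fun K : Subgroup G => IsMulCommutative K) M := by
  refine zorn_le_nonempty₀ {K : Subgroup G | IsMulCommutative K} ?_ A ‹_›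
  intro c hc hchain K hK
  have : Nonempty c := ⟨⟨K, hK⟩⟩
  have : ∀ N : c, IsMulCommutative (N : Subgroup G) := fun N => hc N.2
  exact ⟨⨆ N : c, (N : Subgroup G), isMulCommutative_iSup hchain.directed,
    fun N hN => le_iSup (fun N : c => (N : Subgroup G)) ⟨N, hN⟩⟩

theorem Subgroup.le_normalizer_map_subtype {H : Subgroup G} (A : Subgroup H) [A.Normal] :
    H ≤ normalizer (A.map H.subtype : Set G) :=
  calc H = (⊤ : Subgroup H).map H.subtype := by rw [← MonoidHom.range_eq_map, H.range_subtype]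
    _ = (normalizer (A : Set H)).map H.subtype := by rw [A.normalizer_eq_top]
    _ ≤ _ := le_normalizer_map _

theorem Malnormal.le_of_le_normalizer {M A H : Subgroup G} (hM : Malnormal M) (hAM : A ≤ M)
    (hA : A ≠ ⊥) (hH : H ≤ normalizer (A : Set G)) : H ≤ M := by
  obtain ⟨x, hxA, hx⟩ := A.bot_or_exists_ne_one.resolve_left hA
  intro h hh
  by_contra hhM
  have hconj : h * x * h⁻¹ ∈ A := (mem_normalizer_iff.mp (hH hh) x).mp hxA
  exact hx (hM h hhM x (hAM hxA) (hAM hconj))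

end

theorem Group.IsSolvable.exists_normal_isMulCommutative_ne_bot (G : Type*) [Group G]
    [Group.IsSolvable G] [Nontrivial G] :
    ∃ A : Subgroup G, A.Normal ∧ IsMulCommutative A ∧ A ≠ ⊥ := by
  classical
  have hsolv : ∃ n, derivedSeries G n = ⊥ := IsSolvable.solvable
  obtain ⟨n, hn⟩ : ∃ n, Nat.find hsolv = n + 1 :=
    Nat.exists_eq_succ_of_ne_zero fun h0 =>
      (top_ne_bot : (⊤ : Subgroup G) ≠ ⊥) (by simpa [h0] using Nat.find_spec hsolv)
  refine ⟨derivedSeries G n, derivedSeries_normal G n, ?_, Nat.find_min hsolv (by omega)⟩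
  rw [← commutator_self_eq_bot_iff, ← derivedSeries_succ, ← hn]
  exact Nat.find_spec hsolv

theorem torsionfree_csa_solvable_subgroup_abelian_general {G : Type*} [Group G]
    (hCSA : ∀ M : Subgroup G, IsMulCommutative M →
      (∀ N : Subgroup G, IsMulCommutative N → M ≤ N → M = N) → Malnormal M)
    (H : Subgroup G) (hH : IsSolvable H) :
    ∀ a b : G, a ∈ H → b ∈ H → Commute a b := by
  intro a b ha hb
  rcases subsingleton_or_nontrivial H with _ | _
  · rw [show a = b from congrArg Subtype.val (Subsingleton.elim (⟨a, ha⟩ : H) ⟨b, hb⟩)]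
  have : Group.IsSolvable H := hH
  obtain ⟨A, hAn, hAc, hA⟩ := Group.IsSolvable.exists_normal_isMulCommutative_ne_bot H
  obtain ⟨M, hAM, hM⟩ := (A.map H.subtype).exists_le_maximal_isMulCommutative
  have hMc : IsMulCommutative M := hM.prop
  have hmal : Malnormal M :=
    hCSA M hMc fun N hN hMN => le_antisymm hMN (hM.le_of_ge hN hMN)
  have hHM : H ≤ M := hmal.le_of_le_normalizer hAM
    ((map_eq_bot_iff_of_injective _ H.subtype_injective).not.mpr hA) (le_normalizer_map_subtype A)
  exact setLike_mul_comm (hHM ha) (hHM hb)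

/-- In a torsion-free CSA group, every solvable subgroup is abelian. -/
theorem torsionfree_csa_solvable_subgroup_abelian {G : Type*} [Group G]
    (htf : Monoid.IsTorsionFree G)
    (hCSA : ∀ M : Subgroup G, IsMulCommutative M →
      (∀ N : Subgroup G, IsMulCommutative N → M ≤ N → M = N) → Malnormal M)
    (H : Subgroup G) (hH : IsSolvable H) :
    ∀ a b : G, a ∈ H → b ∈ H → Commute a b :=
  torsionfree_csa_solvable_subgroup_abelian_general hCSA H hH
end

section
/- Let P ≅ ℤⁿ act on ℝ by orientation-preserving isometries (i.e., translations) with indiscrete image in ℝ. For any finite subset W of P and any ε > 0, there exists an automorphism σ of P fixing the kernel of the action elementwise, such that for every w ∈ W and every r ∈ ℝ, |σ(w)·r − r| < ε. -/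
/-!
The image `ρ(P)` is a finitely generated subgroup of `ℝ`, hence free, so `P → ρ(P)` splits and
every automorphism `τ` of `ρ(P)` lifts to an automorphism of `P` that fixes `ker ρ` pointwise
and acts as `τ` through `ρ`. Indiscreteness forces `ρ(P)` to have rank at least two. In rank at
least two, subtracting from every other basis vector the nearest integer multiple of one basis
vector `v` gives a new basis whose other vectors have length at most `|v| / 2`; iterating
produces bases of arbitrarily short vectors, and the change of basis to such a basis shortens
every element of a given finite set.
-/

open Module

theorem abs_sub_round_div_mul_le {x r : ℝ} (hr : r ≠ 0) : |x - round (x / r) * r| ≤ |r| / 2 := by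
  calc |x - round (x / r) * r| = |x / r - round (x / r)| * |r| := by
        rw [← abs_mul, sub_mul, div_mul_cancel₀ x hr]
    _ ≤ 1 / 2 * |r| := by gcongr; exact abs_sub_round _
    _ = |r| / 2 := by ring

theorem AddMonoidHom.exists_addEquiv_lift {P A : Type*} [AddCommGroup P] [AddCommGroup A]
    (π : P →+ A) (s : A →+ P) (hs : ∀ a, π (s a) = a) (τ : A ≃+ A) :
    ∃ σ : P ≃+ P, (∀ p, π (σ p) = τ (π p)) ∧ ∀ p, π p = 0 → σ p = p :=
  ⟨{ toFun p := p + s (τ (π p) - π p)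
     invFun p := p + s (τ.symm (π p) - π p)
     left_inv p := by simp only [map_add, map_sub, hs]; abel_nf; simp
     right_inv p := by simp only [map_add, map_sub, hs]; abel_nf; simp
     map_add' p q := by simp only [map_add, map_sub]; abel },
    fun p => by simp [hs], fun p hp => by simp [hp]⟩

namespace Module.Basis

variable {A : Submodule ℤ ℝ} {ι : Type*}

theorem exists_abs_le_half (b : Basis ι ℤ A) (i : ι) :
    ∃ b' : Basis ι ℤ A, b' i = b i ∧ ∀ j ≠ i, |(b' j : ℝ)| ≤ |(b i : ℝ)| / 2 := by
  classical
  have hbi : (b i : ℝ) ≠ 0 := by simpa using b.ne_zero i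
  set φ : Dual ℤ A := b.constr ℤ fun j => if j = i then 0 else -round ((b j : ℝ) / b i)
  have hφ : φ (b i) = 0 := by simp [φ]
  refine ⟨b.map (LinearEquiv.transvection hφ), by simp [LinearMap.transvection.apply, hφ],
    fun j hj => ?_⟩
  simpa [LinearMap.transvection.apply, φ, hj, ← sub_eq_add_neg] using
    abs_sub_round_div_mul_le (x := b j) hbi

theorem exists_abs_le_div_two_pow [Nontrivial ι] (b : Basis ι ℤ A) (i : ι) (t : ℕ) :
    ∃ (b' : Basis ι ℤ A) (j : ι), |(b' j : ℝ)| ≤ |(b i : ℝ)| / 2 ^ t := by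
  induction t with
  | zero => exact ⟨b, i, by simp⟩
  | succ t ih =>
    obtain ⟨b', j, hj⟩ := ih
    obtain ⟨b'', -, hb''⟩ := b'.exists_abs_le_half j
    obtain ⟨k, hkj⟩ := exists_ne j
    refine ⟨b'', k, (hb'' k hkj).trans ?_⟩
    rw [pow_succ, ← div_div]
    gcongr

theorem exists_forall_abs_lt [Nontrivial ι] (b : Basis ι ℤ A) {δ : ℝ} (hδ : 0 < δ) :
    ∃ b' : Basis ι ℤ A, ∀ j, |(b' j : ℝ)| < δ := by
  obtain ⟨i⟩ := ‹Nontrivial ι›.to_nonempty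
  obtain ⟨t, ht⟩ : ∃ t : ℕ, |(b i : ℝ)| / 2 ^ t < δ := by
    obtain ⟨t, ht⟩ := pow_unbounded_of_one_lt (|(b i : ℝ)| / δ) one_lt_two
    exact ⟨t, by rwa [div_lt_iff₀ (by positivity), mul_comm, ← div_lt_iff₀ hδ]⟩
  obtain ⟨b', j, hj⟩ := b.exists_abs_le_div_two_pow i t
  have hj : |(b' j : ℝ)| < δ := hj.trans_lt ht
  obtain ⟨b'', hb''j, hb''⟩ := b'.exists_abs_le_half j
  refine ⟨b'', fun k => ?_⟩
  rcases eq_or_ne k j with rfl | hkj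
  · rwa [hb''j]
  · linarith [hb'' k hkj, abs_nonneg (b' j : ℝ)]

theorem nontrivial_of_indiscrete (b : Basis ι ℤ A)
    (hA : ∀ ε > 0, ∃ a : A, (a : ℝ) ≠ 0 ∧ |(a : ℝ)| < ε) : Nontrivial ι := by
  by_contra hι
  rw [not_nontrivial_iff_subsingleton] at hι
  obtain ⟨a₀, ha₀, -⟩ := hA 1 one_pos
  have : Nontrivial A := nontrivial_of_ne a₀ 0 (by simpa using ha₀)
  obtain ⟨i⟩ : Nonempty ι := b.index_nonempty
  have : Unique ι := uniqueOfSubsingleton i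
  have hb : 0 < |(b i : ℝ)| := abs_pos.2 (by simpa using b.ne_zero i)
  obtain ⟨a, ha0, ha⟩ := hA _ hb
  have ha_eq : (a : ℝ) = b.repr a i * b i := by
    conv_lhs => rw [← b.linearCombination_repr a]
    simp [Finsupp.linearCombination_unique, Subsingleton.elim default i]
  have hc : (b.repr a i : ℝ) ≠ 0 := by intro hc; simp [ha_eq, hc] at ha0
  have hc1 : 1 ≤ |(b.repr a i : ℝ)| := by exact_mod_cast Int.one_le_abs (by exact_mod_cast hc)
  rw [ha_eq, abs_mul] at ha
  nlinarith

theorem abs_equiv_le [Fintype ι] (b f : Basis ι ℤ A) {δ : ℝ} (hf : ∀ i, |(f i : ℝ)| ≤ δ)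
    (a : A) : |(b.equiv f (Equiv.refl ι) a : ℝ)| ≤ (∑ i, |(b.repr a i : ℝ)|) * δ := by
  have h_eq : (b.equiv f (Equiv.refl ι) a : ℝ) = ∑ i, (b.repr a i : ℝ) * f i := by
    conv_lhs => rw [← b.sum_repr a]
    simp only [map_sum, map_zsmul, Basis.equiv_apply, Equiv.refl_apply,
      AddSubmonoidClass.coe_finsetSum, SetLike.val_smul, zsmul_eq_mul]
  calc |(b.equiv f (Equiv.refl ι) a : ℝ)| ≤ ∑ i, |(b.repr a i : ℝ) * f i| := by
        rw [h_eq]; exact Finset.abs_sum_le_sum_abs _ _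
    _ ≤ ∑ i, |(b.repr a i : ℝ)| * δ := by
        gcongr with i; rw [abs_mul]; exact mul_le_mul_of_nonneg_left (hf i) (abs_nonneg _)
    _ = (∑ i, |(b.repr a i : ℝ)|) * δ := (Finset.sum_mul ..).symm

end Module.Basis

theorem Submodule.exists_linearEquiv_abs_lt {A : Submodule ℤ ℝ} [Module.Finite ℤ A]
    (hA : ∀ ε > 0, ∃ a : A, (a : ℝ) ≠ 0 ∧ |(a : ℝ)| < ε) (W : Finset A) {ε : ℝ} (hε : 0 < ε) :
    ∃ τ : A ≃ₗ[ℤ] A, ∀ w ∈ W, |(τ w : ℝ)| < ε := by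
  let b := Free.chooseBasis ℤ A
  have := b.nontrivial_of_indiscrete hA
  let size : A → ℝ := fun a => ∑ i, |(b.repr a i : ℝ)|
  have hsize : ∀ a, 0 ≤ size a := fun a => Finset.sum_nonneg fun i _ => abs_nonneg _
  set B := ∑ w ∈ W, size w
  have hB : 0 ≤ B := Finset.sum_nonneg fun w _ => hsize w
  obtain ⟨f, hf⟩ := b.exists_forall_abs_lt (δ := ε / (B + 1)) (by positivity)
  refine ⟨b.equiv f (Equiv.refl _), fun w hw => ?_⟩
  calc |(b.equiv f (Equiv.refl _) w : ℝ)| ≤ size w * (ε / (B + 1)) :=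
        b.abs_equiv_le f (fun i => (hf i).le) w
    _ ≤ B * (ε / (B + 1)) := by gcongr; exact Finset.single_le_sum (fun w _ => hsize w) hw
    _ < ε := by rw [mul_div_assoc', div_lt_iff₀ (by positivity)]; linarith

theorem shorten_indiscrete_translation_action_general
    {P : Type*} [AddCommGroup P] [Module.Finite ℤ P]
    (ρ : P →+ ℝ)
    (hindisc : ∀ ε : ℝ, ε > 0 → ∃ p : P, ρ p ≠ 0 ∧ |ρ p| < ε)
    (W : Finset P) (ε : ℝ) (hε : ε > 0) :
    ∃ σ : P ≃+ P, (∀ p : P, ρ p = 0 → σ p = p) ∧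
      ∀ w ∈ W, ∀ r : ℝ, |(r + ρ (σ w)) - r| < ε := by
  let π := ρ.toIntLinearMap.rangeRestrict
  obtain ⟨s, hs⟩ := π.exists_rightInverse_of_surjective (LinearMap.range_rangeRestrict _)
  have hA : ∀ ε > 0, ∃ a : LinearMap.range ρ.toIntLinearMap, (a : ℝ) ≠ 0 ∧ |(a : ℝ)| < ε :=
    fun ε hε => let ⟨p, hp⟩ := hindisc ε hε; ⟨π p, hp⟩
  obtain ⟨τ, hτ⟩ := Submodule.exists_linearEquiv_abs_lt hA (W.image π) hε
  obtain ⟨σ, hσπ, hσ_ker⟩ := π.toAddMonoidHom.exists_addEquiv_lift s.toAddMonoidHom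
    (LinearMap.congr_fun hs) τ.toAddEquiv
  refine ⟨σ, fun p hp => hσ_ker p (Subtype.ext hp), fun w hw r => ?_⟩
  have hρσ : ρ (σ w) = τ (π w) := congrArg Subtype.val (hσπ w)
  rw [add_sub_cancel_left, hρσ]
  exact hτ (π w) (Finset.mem_image_of_mem π hw)

/-- Shortening for an indiscrete translation action of `ℤⁿ` on `ℝ`: for any finite set `W`
and ε > 0 there is an automorphism `σ` of `P` fixing the kernel of the action elementwise,
such that every `w ∈ W` moves every point of `ℝ` by less than ε after applying `σ`. -/
theorem shorten_indiscrete_translation_action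
    {P : Type*} [AddCommGroup P] [Module.Free ℤ P] [Module.Finite ℤ P]
    (ρ : P →+ ℝ)
    (hindisc : ∀ ε : ℝ, ε > 0 → ∃ p : P, ρ p ≠ 0 ∧ |ρ p| < ε)
    (W : Finset P) (ε : ℝ) (hε : ε > 0) :
    ∃ σ : P ≃+ P, (∀ p : P, ρ p = 0 → σ p = p) ∧
      ∀ w ∈ W, ∀ r : ℝ, |(r + ρ (σ w)) - r| < ε :=
  shorten_indiscrete_translation_action_general ρ hindisc W ε hε
end

section
/- Let Γ be a group acting by isometries on a metric space X with basepoint x, let G be a finitely generated group with finite generating set A, and suppose {h_n: G → Γ} is a sequence of pairwise non-conjugate homomorphisms such that for every R the set {γ ∈ Γ : d(x, γ·x) ≤ R} is finite. Then the sequence of lengths ‖h_n‖ := min over γ ∈ Γ of max over g ∈ A of d(x, (γ h_n(g) γ⁻¹)·x) has no bounded subsequence. -/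
open Finset

lemma le_biSup_finset' {G : Type*} (A : Finset G) (f : G → ℝ) {g : G} (hg : g ∈ A) :
    f g ≤ ⨆ g ∈ A, f g := by
  have hbdd : BddAbove (Set.range fun g => ⨆ _ : g ∈ A, f g) := by
    apply Set.Finite.bddAbove
    apply (((A.finite_toSet.image f).union (Set.finite_singleton 0))).subset
    rintro _ ⟨a, rfl⟩
    by_cases ha : a ∈ A
    · haveI : Nonempty (a ∈ A) := ⟨ha⟩
      left
      exact ⟨a, ha, (ciSup_const).symm⟩
    · haveI : IsEmpty (a ∈ A) := ⟨ha⟩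
      right
      simp [Real.iSup_of_isEmpty]
  haveI : Nonempty (g ∈ A) := ⟨hg⟩
  calc f g = ⨆ _ : g ∈ A, f g := (ciSup_const).symm
    _ ≤ ⨆ g ∈ A, f g := le_ciSup hbdd g

/-- If Γ acts on X metrically properly at the basepoint x, and {hₙ : G → Γ} is a sequence of
pairwise non-conjugate homomorphisms from a finitely generated group G, then the sequence of
lengths ‖hₙ‖ has no bounded subsequence. -/
theorem lengths_of_nonconjugate_homs_unbounded
    {Γ G X : Type*} [Group Γ] [Group G] [MetricSpace X]
    [MulAction Γ X] (hisom : ∀ γ : Γ, Isometry (fun p : X => γ • p))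
    (x : X) (hproper : ∀ R : ℝ, {γ : Γ | dist x (γ • x) ≤ R}.Finite)
    (A : Finset G) (hgen : Subgroup.closure (A : Set G) = ⊤)
    (h : ℕ → (G →* Γ))
    (hnc : ∀ m n : ℕ, m ≠ n → ¬∃ γ : Γ, ∀ g : G, h m g = γ * h n g * γ⁻¹) :
    ∀ B : ℝ, {n : ℕ | (⨅ γ : Γ, ⨆ g ∈ A, dist x ((γ * h n g * γ⁻¹) • x)) ≤ B}.Finite := by
  intro B
  by_contra hinf
  -- hinf is definitionally S.Infinite
  set S := {n : ℕ | (⨅ γ : Γ, ⨆ g ∈ A, dist x ((γ * h n g * γ⁻¹) • x)) ≤ B} with hS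
  -- for each n ∈ S, extract a good conjugator
  have hex : ∀ n, n ∈ S → ∃ γ : Γ, ∀ g ∈ A, dist x ((γ * h n g * γ⁻¹) • x) ≤ B + 1 := by
    intro n hn
    by_contra hcon
    push_neg at hcon
    have hge : ∀ γ : Γ, B + 1 ≤ ⨆ g ∈ A, dist x ((γ * h n g * γ⁻¹) • x) := by
      intro γ
      obtain ⟨g, hgA, hgt⟩ := hcon γ
      exact le_trans hgt.le (le_biSup_finset' A (fun g => dist x ((γ * h n g * γ⁻¹) • x)) hgA)
    have := le_ciInf hge
    have hnB : (⨅ γ : Γ, ⨆ g ∈ A, dist x ((γ * h n g * γ⁻¹) • x)) ≤ B := hn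
    linarith
  choose! γf hγf using hex
  -- pigeonhole
  have hmaps : Set.MapsTo (fun n => fun a : A => γf n * h n a * (γf n)⁻¹) S
      (Set.pi Set.univ (fun _ : A => {γ : Γ | dist x (γ • x) ≤ B + 1})) := by
    intro n hn a _
    exact hγf n hn a a.2
  have htfin : (Set.pi Set.univ (fun _ : A => {γ : Γ | dist x (γ • x) ≤ B + 1})).Finite :=
    Set.Finite.pi (fun _ => hproper (B + 1))
  obtain ⟨m, hm, n, hn, hmn, heq⟩ := (Set.Infinite.exists_ne_map_eq_of_mapsTo (s := S) hinf hmaps htfin)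
  apply hnc m n hmn
  refine ⟨(γf m)⁻¹ * γf n, fun g => ?_⟩
  set δ := (γf m)⁻¹ * γf n with hδ
  have hmemA : ∀ a ∈ A, h m a = δ * h n a * δ⁻¹ := by
    intro a ha
    have heqa : γf m * h m a * (γf m)⁻¹ = γf n * h n a * (γf n)⁻¹ := congrFun heq (⟨a, ha⟩ : A)
    rw [hδ]
    calc h m a = (γf m)⁻¹ * (γf m * h m a * (γf m)⁻¹) * γf m := by group
      _ = (γf m)⁻¹ * (γf n * h n a * (γf n)⁻¹) * γf m := by rw [heqa]
      _ = _ := by group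
  have hg : g ∈ Subgroup.closure (A : Set G) := by rw [hgen]; trivial
  refine Subgroup.closure_induction (fun a ha => hmemA a ha) ?_ ?_ ?_ hg
  · simp
  · intro a b _ _ pa pb
    rw [map_mul, map_mul, pa, pb]
    group
  · intro a _ pa
    rw [map_inv, map_inv, pa]
    group
end
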